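/- arXiv:2007.08316 — 2 statements merged into one kernel-verified Lean document; each statement's English description precedes it below -/
import Mathlib

section
/- Let 0 < α < β, let g : [α,β] → ℂ be real-valued and continuously differentiable with g(α) = 1 and g(β) = −1, and set M_g = max_{[α,β]} |g| and M_{g′} = max_{[α,β]} |g′|. Let λ ∈ ℝ and let u, v, f : [α,β] → ℂ be continuously differentiable with i λ u′(x) − v′(x) = f′(x) for all x ∈ (α,β). Then |v(β)|² + |v(α)|² ≤ M_{g′} ∫_α^β |v|² dx + 2|λ| M_g (∫_α^β |u′|² dx)^{1/2} (∫_α^β |v|² dx)^{1/2} + 2 M_g (∫_α^β |f′|² dx)^{1/2} (∫_α^β |v|² dx)^{1/2}. -/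
/-! Integrating the multiplier identity `(g ‖v‖²)′ = g′ ‖v‖² + 2 g ⟪v, v′⟫` over `[α, β]` gives
`g(β) ‖v(β)‖² − g(α) ‖v(α)‖² = −(‖v(β)‖² + ‖v(α)‖²)`, since `g(α) = 1` and `g(β) = −1`. Bounding
`|g|, |g′|` by their maxima, substituting `v′ = iλu′ − f′` and applying Cauchy–Schwarz to the
cross terms gives the estimate. -/

open MeasureTheory Complex Set

theorem ContinuousOn.memLp_restrict_of_isCompact {X E : Type*} [TopologicalSpace X]
    [MeasurableSpace X] [OpensMeasurableSpace X] [NormedAddCommGroup E] {μ : Measure X}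
    [IsFiniteMeasureOnCompacts μ] {s : Set X} {F : X → E} (hs : IsCompact s)
    (hsm : MeasurableSet s) (hF : ContinuousOn F s) (p : ENNReal) :
    MemLp F p (μ.restrict s) := by
  have : IsFiniteMeasure (μ.restrict s) := isFiniteMeasure_restrict.2 hs.measure_lt_top.ne
  obtain ⟨C, hC⟩ := hs.exists_bound_of_continuousOn hF
  exact MemLp.of_bound (hF.aestronglyMeasurable_of_isCompact hs hsm) C
    ((ae_restrict_iff' hsm).2 (ae_of_all _ hC))

theorem intervalIntegral.integral_norm_mul_norm_le_sqrt_mul_sqrt {E : Type*}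
    [NormedAddCommGroup E] {a b : ℝ} (hab : a ≤ b) {F G : ℝ → E}
    (hF : ContinuousOn F (Icc a b)) (hG : ContinuousOn G (Icc a b)) :
    ∫ x in a..b, ‖F x‖ * ‖G x‖ ≤
      √(∫ x in a..b, ‖F x‖ ^ 2) * √(∫ x in a..b, ‖G x‖ ^ 2) := by
  have hL2 {H : ℝ → E} (hH : ContinuousOn H (Icc a b)) :=
    hH.memLp_restrict_of_isCompact (μ := volume) isCompact_Icc measurableSet_Icc
      (ENNReal.ofReal 2)
  have := integral_mul_norm_le_Lp_mul_Lq Real.HolderConjugate.two_two (hL2 hF) (hL2 hG)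
  simp only [Real.rpow_two, ← Real.sqrt_eq_rpow] at this
  simpa only [integral_of_le hab, ← integral_Icc_eq_integral_Ioc] using this

section Multiplier

variable {E : Type*} [NormedAddCommGroup E] [InnerProductSpace ℝ E] {a b : ℝ} {g g' : ℝ → ℝ}
  {v v' : ℝ → E}

theorem intervalIntegral.integral_deriv_mul_norm_sq_eq_sub
    (hg : ∀ x ∈ uIcc a b, HasDerivAt g (g' x) x) (hg'c : ContinuousOn g' (uIcc a b))
    (hv : ∀ x ∈ uIcc a b, HasDerivAt v (v' x) x) (hv'c : ContinuousOn v' (uIcc a b)) :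
    ∫ x in a..b, (g' x * ‖v x‖ ^ 2 + g x * (2 * inner ℝ (v x) (v' x))) =
      g b * ‖v b‖ ^ 2 - g a * ‖v a‖ ^ 2 := by
  have hgc : ContinuousOn g (uIcc a b) := fun x hx => (hg x hx).continuousAt.continuousWithinAt
  have hvc : ContinuousOn v (uIcc a b) := fun x hx => (hv x hx).continuousAt.continuousWithinAt
  refine integral_eq_sub_of_hasDerivAt (fun x hx => (hg x hx).mul (hv x hx).norm_sq) ?_
  exact ((hg'c.mul (hvc.norm.pow 2)).add
    (hgc.mul (continuousOn_const.mul (hvc.inner hv'c)))).intervalIntegrable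

theorem norm_sq_add_norm_sq_le_of_multiplier {Mg Mg' : ℝ} (hab : a ≤ b)
    (hg : ∀ x ∈ Icc a b, HasDerivAt g (g' x) x) (hg'c : ContinuousOn g' (Icc a b))
    (hga : g a = 1) (hgb : g b = -1)
    (hgM : ∀ x ∈ Icc a b, |g x| ≤ Mg) (hg'M : ∀ x ∈ Icc a b, |g' x| ≤ Mg')
    (hv : ∀ x ∈ Icc a b, HasDerivAt v (v' x) x) (hv'c : ContinuousOn v' (Icc a b)) :
    ‖v b‖ ^ 2 + ‖v a‖ ^ 2 ≤
      Mg' * (∫ x in a..b, ‖v x‖ ^ 2) + 2 * Mg * ∫ x in a..b, ‖v x‖ * ‖v' x‖ := by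
  have hMg : 0 ≤ Mg := (abs_nonneg _).trans (hgM a (left_mem_Icc.2 hab))
  have hgc : ContinuousOn g (Icc a b) := fun x hx => (hg x hx).continuousAt.continuousWithinAt
  have hvc : ContinuousOn v (Icc a b) := fun x hx => (hv x hx).continuousAt.continuousWithinAt
  rw [← uIcc_of_le hab] at hg hg'c hgc hv hv'c hvc
  have hi₀ : IntervalIntegrable
      (fun x => -(g' x * ‖v x‖ ^ 2 + g x * (2 * inner ℝ (v x) (v' x)))) volume a b :=
    ((hg'c.mul (hvc.norm.pow 2)).add
      (hgc.mul (continuousOn_const.mul (hvc.inner hv'c)))).neg.intervalIntegrable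
  have hi₁ : IntervalIntegrable (fun x => ‖v x‖ ^ 2) volume a b :=
    (hvc.norm.pow 2).intervalIntegrable
  have hi₂ : IntervalIntegrable (fun x => ‖v x‖ * ‖v' x‖) volume a b :=
    (hvc.norm.mul hv'c.norm).intervalIntegrable
  calc ‖v b‖ ^ 2 + ‖v a‖ ^ 2
      = ∫ x in a..b, -(g' x * ‖v x‖ ^ 2 + g x * (2 * inner ℝ (v x) (v' x))) := by
        rw [intervalIntegral.integral_neg,
          intervalIntegral.integral_deriv_mul_norm_sq_eq_sub hg hg'c hv hv'c, hga, hgb]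
        ring
    _ ≤ ∫ x in a..b, (Mg' * ‖v x‖ ^ 2 + 2 * Mg * (‖v x‖ * ‖v' x‖)) := by
        refine intervalIntegral.integral_mono_on hab hi₀ ((hi₁.const_mul _).add
          (hi₂.const_mul _)) fun x hx => ?_
        have hg'x : -g' x * ‖v x‖ ^ 2 ≤ Mg' * ‖v x‖ ^ 2 :=
          mul_le_mul_of_nonneg_right ((neg_le_abs _).trans (hg'M x hx)) (sq_nonneg _)
        have hgx : |g x| * |inner ℝ (v x) (v' x)| ≤ Mg * (‖v x‖ * ‖v' x‖) :=
          mul_le_mul (hgM x hx) (abs_real_inner_le_norm _ _) (abs_nonneg _) hMg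
        have := neg_le_abs (g x * inner ℝ (v x) (v' x))
        rw [abs_mul] at this
        linarith
    _ = _ := by
        rw [intervalIntegral.integral_add (hi₁.const_mul _) (hi₂.const_mul _),
          intervalIntegral.integral_const_mul, intervalIntegral.integral_const_mul]

end Multiplier

theorem stmt_7_general (α β lam Mg Mg' : ℝ) (hαβ : α < β)
    (g g' : ℝ → ℝ)
    (hg : ∀ x ∈ Set.Icc α β, HasDerivAt g (g' x) x)
    (hg'c : ContinuousOn g' (Set.Icc α β))
    (hgα : g α = 1) (hgβ : g β = -1)
    (hMg : IsGreatest ((fun x => |g x|) '' Set.Icc α β) Mg)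
    (hMg' : IsGreatest ((fun x => |g' x|) '' Set.Icc α β) Mg')
    (v u' v' f' : ℝ → ℂ)
    (hv : ∀ x ∈ Set.Icc α β, HasDerivAt v (v' x) x)
    (hu'c : ContinuousOn u' (Set.Icc α β))
    (hv'c : ContinuousOn v' (Set.Icc α β))
    (hf'c : ContinuousOn f' (Set.Icc α β))
    (heq : ∀ x ∈ Set.Ioo α β, Complex.I * (lam : ℂ) * u' x - v' x = f' x) :
    ‖v β‖ ^ 2 + ‖v α‖ ^ 2 ≤
      Mg' * (∫ x in α..β, ‖v x‖ ^ 2)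
        + 2 * |lam| * Mg * Real.sqrt (∫ x in α..β, ‖u' x‖ ^ 2)
            * Real.sqrt (∫ x in α..β, ‖v x‖ ^ 2)
        + 2 * Mg * Real.sqrt (∫ x in α..β, ‖f' x‖ ^ 2)
            * Real.sqrt (∫ x in α..β, ‖v x‖ ^ 2) := by
  have hab := hαβ.le
  have hMg0 : 0 ≤ Mg := (abs_nonneg _).trans (hMg.2 ⟨α, left_mem_Icc.2 hab, rfl⟩)
  have hvc : ContinuousOn v (Icc α β) := fun x hx => (hv x hx).continuousAt.continuousWithinAt
  have hv'_le : ∀ x ∈ Ioo α β, ‖v x‖ * ‖v' x‖ ≤ |lam| * (‖u' x‖ * ‖v x‖) + ‖f' x‖ * ‖v x‖ := by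
    intro x hx
    have hv'x : ‖v' x‖ ≤ |lam| * ‖u' x‖ + ‖f' x‖ := by
      rw [show v' x = I * lam * u' x - f' x by linear_combination -heq x hx]
      simpa using norm_sub_le (I * lam * u' x) (f' x)
    nlinarith [mul_le_mul_of_nonneg_left hv'x (norm_nonneg (v x))]
  have hcross : ∫ x in α..β, ‖v x‖ * ‖v' x‖ ≤
      |lam| * (∫ x in α..β, ‖u' x‖ * ‖v x‖) + ∫ x in α..β, ‖f' x‖ * ‖v x‖ := by
    rw [← uIcc_of_le hab] at hvc hu'c hv'c hf'c
    have hu'v : IntervalIntegrable (fun x => ‖u' x‖ * ‖v x‖) volume α β :=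
      (hu'c.norm.mul hvc.norm).intervalIntegrable
    have hf'v : IntervalIntegrable (fun x => ‖f' x‖ * ‖v x‖) volume α β :=
      (hf'c.norm.mul hvc.norm).intervalIntegrable
    rw [← intervalIntegral.integral_const_mul, ← intervalIntegral.integral_add
      (hu'v.const_mul _) hf'v]
    exact intervalIntegral.integral_mono_on_of_le_Ioo hab
      (hvc.norm.mul hv'c.norm).intervalIntegrable ((hu'v.const_mul _).add hf'v) hv'_le
  calc ‖v β‖ ^ 2 + ‖v α‖ ^ 2
      ≤ Mg' * (∫ x in α..β, ‖v x‖ ^ 2) + 2 * Mg * ∫ x in α..β, ‖v x‖ * ‖v' x‖ :=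
        norm_sq_add_norm_sq_le_of_multiplier hab hg hg'c hgα hgβ
          (fun x hx => hMg.2 ⟨x, hx, rfl⟩) (fun x hx => hMg'.2 ⟨x, hx, rfl⟩) hv hv'c
    _ ≤ Mg' * (∫ x in α..β, ‖v x‖ ^ 2) + 2 * Mg * (|lam| * (∫ x in α..β, ‖u' x‖ * ‖v x‖)
          + ∫ x in α..β, ‖f' x‖ * ‖v x‖) := by gcongr
    _ ≤ Mg' * (∫ x in α..β, ‖v x‖ ^ 2) + 2 * Mg * (|lam| * (√(∫ x in α..β, ‖u' x‖ ^ 2)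
          * √(∫ x in α..β, ‖v x‖ ^ 2)) + √(∫ x in α..β, ‖f' x‖ ^ 2)
          * √(∫ x in α..β, ‖v x‖ ^ 2)) := by
        gcongr
        · exact intervalIntegral.integral_norm_mul_norm_le_sqrt_mul_sqrt hab hu'c hvc
        · exact intervalIntegral.integral_norm_mul_norm_le_sqrt_mul_sqrt hab hf'c hvc
    _ = _ := by ring

/-- Boundary-trace estimate for the velocity `v` from the differentiated resolvent
equation `iλu′ − v′ = f′` on `(α,β)`, via the multiplier `2 g v̄`. -/
theorem stmt_7 (α β lam Mg Mg' : ℝ) (hα : 0 < α) (hαβ : α < β)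
    (g g' : ℝ → ℝ)
    (hg : ∀ x ∈ Set.Icc α β, HasDerivAt g (g' x) x)
    (hg'c : ContinuousOn g' (Set.Icc α β))
    (hgα : g α = 1) (hgβ : g β = -1)
    (hMg : IsGreatest ((fun x => |g x|) '' Set.Icc α β) Mg)
    (hMg' : IsGreatest ((fun x => |g' x|) '' Set.Icc α β) Mg')
    (u v f u' v' f' : ℝ → ℂ)
    (hu : ∀ x ∈ Set.Icc α β, HasDerivAt u (u' x) x)
    (hv : ∀ x ∈ Set.Icc α β, HasDerivAt v (v' x) x)
    (hf : ∀ x ∈ Set.Icc α β, HasDerivAt f (f' x) x)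
    (hu'c : ContinuousOn u' (Set.Icc α β))
    (hv'c : ContinuousOn v' (Set.Icc α β))
    (hf'c : ContinuousOn f' (Set.Icc α β))
    (heq : ∀ x ∈ Set.Ioo α β, Complex.I * (lam : ℂ) * u' x - v' x = f' x) :
    ‖v β‖ ^ 2 + ‖v α‖ ^ 2 ≤
      Mg' * (∫ x in α..β, ‖v x‖ ^ 2)
        + 2 * |lam| * Mg * Real.sqrt (∫ x in α..β, ‖u' x‖ ^ 2)
            * Real.sqrt (∫ x in α..β, ‖v x‖ ^ 2)
        + 2 * Mg * Real.sqrt (∫ x in α..β, ‖f' x‖ ^ 2)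
            * Real.sqrt (∫ x in α..β, ‖v x‖ ^ 2) :=
  stmt_7_general α β lam Mg Mg' hαβ g g' hg hg'c hgα hgβ hMg hMg' v u' v' f' hv hu'c hv'c hf'c heq
end

section
/- Let 0 < α < γ < L, c₀ > 0, λ ∈ ℝ, and let θ : [0,L] → ℝ be continuously differentiable. Let v, z, S : [0,L] → ℂ be continuously differentiable with v(0) = v(L) = z(0) = z(L) = 0, let y : [0,L] → ℂ be twice continuously differentiable, and let g₂, g₄ : [0,L] → ℂ be continuous, satisfying on (0,L): i λ v − S′ + c(·) z = g₂ and i λ z − y″ − c(·) v = g₄. Then ∫₀^L c(·) θ |z|² dx = ∫₀^L c(·) θ |v|² dx − Re( ∫₀^L (θ′ z̄ + θ z̄′) S dx ) − Re( ∫₀^L (θ′ v̄ + θ v̄′) y′ dx ) + Re( ∫₀^L θ g₂ z̄ dx ) + Re( ∫₀^L θ g₄ v̄ dx ). -/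
/-!
Pointwise, multiplying the two resolvent equations by `θ z̄` and `θ v̄` and taking real parts
turns `c θ |z|²` into `c θ |v|²` plus real parts of `θ z̄ S'`, `θ v̄ y''` and the forcing
terms, since `iλ θ (z̄ v + v̄ z)` is purely imaginary. Integrating over `(0, L)` and moving the derivative
off `S` and `y'` by parts (no boundary terms, as `v` and `z` vanish at `0` and `L`) gives the
identity.
-/

open MeasureTheory Complex Set intervalIntegral
open scoped ComplexConjugate Interval

theorem IntervalIntegrable.indicator {E : Type*} [NormedAddCommGroup E] {f : ℝ → E}
    {μ : Measure ℝ} {a b : ℝ} (hf : IntervalIntegrable f μ a b) {s : Set ℝ}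
    (hs : MeasurableSet s) : IntervalIntegrable (s.indicator f) μ a b :=
  ⟨hf.1.indicator hs, hf.2.indicator hs⟩

theorem intervalIntegral.integral_mul_deriv_eq_neg_deriv_mul_of_eq_zero {A : Type*}
    [NormedRing A] [NormedAlgebra ℝ A] [CompleteSpace A] {a b : ℝ} {u u' v v' : ℝ → A}
    (hu : ∀ x ∈ [[a, b]], HasDerivAt u (u' x) x) (hv : ∀ x ∈ [[a, b]], HasDerivAt v (v' x) x)
    (hu' : ContinuousOn u' [[a, b]]) (hv' : ContinuousOn v' [[a, b]])
    (ha : u a = 0) (hb : u b = 0) :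
    ∫ x in a..b, u x * v' x = -∫ x in a..b, u' x * v x := by
  have hIoo : Ioo (min a b) (max a b) ⊆ [[a, b]] := Ioo_subset_Icc_self
  rw [integral_mul_deriv_eq_deriv_mul_of_hasDerivAt (HasDerivAt.continuousOn hu)
    (HasDerivAt.continuousOn hv) (fun x hx ↦ hu x (hIoo hx)) (fun x hx ↦ hv x (hIoo hx))
    hu'.intervalIntegrable hv'.intervalIntegrable, ha, hb]
  simp

theorem integral_ofReal_mul_conj_mul_deriv {a b : ℝ} {θ θ' : ℝ → ℝ} {w w' f f' : ℝ → ℂ}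
    (hθ : ∀ x ∈ [[a, b]], HasDerivAt θ (θ' x) x) (hθ' : ContinuousOn θ' [[a, b]])
    (hw : ∀ x ∈ [[a, b]], HasDerivAt w (w' x) x) (hw' : ContinuousOn w' [[a, b]])
    (hf : ∀ x ∈ [[a, b]], HasDerivAt f (f' x) x) (hf' : ContinuousOn f' [[a, b]])
    (ha : w a = 0) (hb : w b = 0) :
    ∫ x in a..b, θ x * conj (w x) * f' x
      = -∫ x in a..b, (θ' x * conj (w x) + θ x * conj (w' x)) * f x := by
  have hθc := HasDerivAt.continuousOn hθ
  have hwc := HasDerivAt.continuousOn hw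
  refine integral_mul_deriv_eq_neg_deriv_mul_of_eq_zero
    (fun x hx ↦ (hθ x hx).ofReal_comp.mul (hw x hx).star) hf ?_ hf' (by simp [ha]) (by simp [hb])
  fun_prop

theorem mul_norm_sq_eq_of_coupled_resolvent (c θ lam : ℝ) (v z s y g₂ g₄ : ℂ)
    (h₂ : I * lam * v - s + c * z = g₂) (h₄ : I * lam * z - y - c * v = g₄) :
    c * θ * ‖z‖ ^ 2 = c * θ * ‖v‖ ^ 2
      + (θ * conj z * s + θ * conj v * y + θ * g₂ * conj z + θ * g₄ * conj v).re := by
  subst h₂ h₄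
  simp only [Complex.sq_norm, normSq_apply, add_re, mul_re, mul_im, sub_re, sub_im, add_im,
    conj_re, conj_im, ofReal_re, ofReal_im, I_re, I_im]
  ring

theorem stmt_11_general (L α γ c₀ lam : ℝ)
    (hα : 0 < α) (hαγ : α < γ) (hγL : γ < L)
    (c : ℝ → ℝ) (hc : ∀ x, c x = if α < x ∧ x < γ then c₀ else 0)
    (θ θ' : ℝ → ℝ)
    (hθ : ∀ x ∈ Set.Icc (0:ℝ) L, HasDerivAt θ (θ' x) x)
    (hθ'c : ContinuousOn θ' (Set.Icc 0 L))
    (v v' z z' S S' : ℝ → ℂ)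
    (hv : ∀ x ∈ Set.Icc (0:ℝ) L, HasDerivAt v (v' x) x)
    (hv'c : ContinuousOn v' (Set.Icc 0 L))
    (hz : ∀ x ∈ Set.Icc (0:ℝ) L, HasDerivAt z (z' x) x)
    (hz'c : ContinuousOn z' (Set.Icc 0 L))
    (hS : ∀ x ∈ Set.Icc (0:ℝ) L, HasDerivAt S (S' x) x)
    (hS'c : ContinuousOn S' (Set.Icc 0 L))
    (hv0 : v 0 = 0) (hvL : v L = 0) (hz0 : z 0 = 0) (hzL : z L = 0)
    (y' y'' : ℝ → ℂ)
    (hy' : ∀ x ∈ Set.Icc (0:ℝ) L, HasDerivAt y' (y'' x) x)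
    (hy''c : ContinuousOn y'' (Set.Icc 0 L))
    (g₂ g₄ : ℝ → ℂ)
    (hg₂c : ContinuousOn g₂ (Set.Icc 0 L)) (hg₄c : ContinuousOn g₄ (Set.Icc 0 L))
    (heq2 : ∀ x ∈ Set.Ioo (0:ℝ) L,
      Complex.I * (lam : ℂ) * v x - S' x + (c x : ℂ) * z x = g₂ x)
    (heq4 : ∀ x ∈ Set.Ioo (0:ℝ) L,
      Complex.I * (lam : ℂ) * z x - y'' x - (c x : ℂ) * v x = g₄ x) :
    ∫ x in (0:ℝ)..L, c x * θ x * ‖z x‖ ^ 2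
      = (∫ x in (0:ℝ)..L, c x * θ x * ‖v x‖ ^ 2)
        - (∫ x in (0:ℝ)..L,
            ((θ' x : ℂ) * (starRingEnd ℂ) (z x)
              + (θ x : ℂ) * (starRingEnd ℂ) (z' x)) * S x).re
        - (∫ x in (0:ℝ)..L,
            ((θ' x : ℂ) * (starRingEnd ℂ) (v x)
              + (θ x : ℂ) * (starRingEnd ℂ) (v' x)) * y' x).re
        + (∫ x in (0:ℝ)..L, (θ x : ℂ) * g₂ x * (starRingEnd ℂ) (z x)).re
        + (∫ x in (0:ℝ)..L, (θ x : ℂ) * g₄ x * (starRingEnd ℂ) (v x)).re := by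
  have hL : 0 ≤ L := by linarith
  rw [← uIcc_of_le hL] at *
  have hθc := HasDerivAt.continuousOn hθ
  have hvc := HasDerivAt.continuousOn hv
  have hzc := HasDerivAt.continuousOn hz
  have hcInt : IntervalIntegrable c volume 0 L := by
    have : c = (Ioo α γ).indicator (fun _ ↦ c₀) := funext fun x ↦ by simp [hc, indicator]
    exact this ▸ intervalIntegrable_const.indicator measurableSet_Ioo
  have hvInt : IntervalIntegrable (fun x ↦ c x * θ x * ‖v x‖ ^ 2) volume 0 L :=
    (hcInt.mul_continuousOn hθc).mul_continuousOn (by fun_prop)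
  have hsum : IntervalIntegrable (fun x ↦ θ x * conj (z x) * S' x + θ x * conj (v x) * y'' x
      + θ x * g₂ x * conj (z x) + θ x * g₄ x * conj (v x)) volume 0 L := by
    apply ContinuousOn.intervalIntegrable; fun_prop
  calc ∫ x in (0:ℝ)..L, c x * θ x * ‖z x‖ ^ 2
      = ∫ x in (0:ℝ)..L, c x * θ x * ‖v x‖ ^ 2 + (θ x * conj (z x) * S' x
          + θ x * conj (v x) * y'' x + θ x * g₂ x * conj (z x) + θ x * g₄ x * conj (v x)).re :=
        integral_congr_Ioo_of_le hL fun x hx ↦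
          mul_norm_sq_eq_of_coupled_resolvent _ _ lam _ _ _ _ _ _ (heq2 x hx) (heq4 x hx)
    _ = (∫ x in (0:ℝ)..L, c x * θ x * ‖v x‖ ^ 2) + (∫ x in (0:ℝ)..L, θ x * conj (z x) * S' x
          + θ x * conj (v x) * y'' x + θ x * g₂ x * conj (z x) + θ x * g₄ x * conj (v x)).re := by
        rw [intervalIntegral.integral_add hvInt ?_]
        · exact congrArg _ (intervalIntegral_re hsum)
        · exact ⟨hsum.1.re, hsum.2.re⟩
    _ = _ := by
      rw [intervalIntegral.integral_add, intervalIntegral.integral_add,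
        intervalIntegral.integral_add,
        integral_ofReal_mul_conj_mul_deriv hθ hθ'c hz hz'c hS hS'c hz0 hzL,
        integral_ofReal_mul_conj_mul_deriv hθ hθ'c hv hv'c hy' hy''c hv0 hvL]
      · simp only [add_re, neg_re]
        ring
      all_goals apply ContinuousOn.intervalIntegrable; fun_prop

/-- Cut-off multiplier identity transferring the estimate on `v` to an estimate on
`z` in the coupling region, where `c(x) = c₀` on `(α,γ)` and `0` elsewhere. -/
theorem stmt_11 (L α γ c₀ lam : ℝ)
    (hα : 0 < α) (hαγ : α < γ) (hγL : γ < L) (hc₀ : 0 < c₀)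
    (c : ℝ → ℝ) (hc : ∀ x, c x = if α < x ∧ x < γ then c₀ else 0)
    (θ θ' : ℝ → ℝ)
    (hθ : ∀ x ∈ Set.Icc (0:ℝ) L, HasDerivAt θ (θ' x) x)
    (hθ'c : ContinuousOn θ' (Set.Icc 0 L))
    (v v' z z' S S' : ℝ → ℂ)
    (hv : ∀ x ∈ Set.Icc (0:ℝ) L, HasDerivAt v (v' x) x)
    (hv'c : ContinuousOn v' (Set.Icc 0 L))
    (hz : ∀ x ∈ Set.Icc (0:ℝ) L, HasDerivAt z (z' x) x)
    (hz'c : ContinuousOn z' (Set.Icc 0 L))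
    (hS : ∀ x ∈ Set.Icc (0:ℝ) L, HasDerivAt S (S' x) x)
    (hS'c : ContinuousOn S' (Set.Icc 0 L))
    (hv0 : v 0 = 0) (hvL : v L = 0) (hz0 : z 0 = 0) (hzL : z L = 0)
    (y y' y'' : ℝ → ℂ)
    (hy : ∀ x ∈ Set.Icc (0:ℝ) L, HasDerivAt y (y' x) x)
    (hy' : ∀ x ∈ Set.Icc (0:ℝ) L, HasDerivAt y' (y'' x) x)
    (hy''c : ContinuousOn y'' (Set.Icc 0 L))
    (g₂ g₄ : ℝ → ℂ)
    (hg₂c : ContinuousOn g₂ (Set.Icc 0 L)) (hg₄c : ContinuousOn g₄ (Set.Icc 0 L))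
    (heq2 : ∀ x ∈ Set.Ioo (0:ℝ) L,
      Complex.I * (lam : ℂ) * v x - S' x + (c x : ℂ) * z x = g₂ x)
    (heq4 : ∀ x ∈ Set.Ioo (0:ℝ) L,
      Complex.I * (lam : ℂ) * z x - y'' x - (c x : ℂ) * v x = g₄ x) :
    ∫ x in (0:ℝ)..L, c x * θ x * ‖z x‖ ^ 2
      = (∫ x in (0:ℝ)..L, c x * θ x * ‖v x‖ ^ 2)
        - (∫ x in (0:ℝ)..L,
            ((θ' x : ℂ) * (starRingEnd ℂ) (z x)
              + (θ x : ℂ) * (starRingEnd ℂ) (z' x)) * S x).re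
        - (∫ x in (0:ℝ)..L,
            ((θ' x : ℂ) * (starRingEnd ℂ) (v x)
              + (θ x : ℂ) * (starRingEnd ℂ) (v' x)) * y' x).re
        + (∫ x in (0:ℝ)..L, (θ x : ℂ) * g₂ x * (starRingEnd ℂ) (z x)).re
        + (∫ x in (0:ℝ)..L, (θ x : ℂ) * g₄ x * (starRingEnd ℂ) (v x)).re :=
  stmt_11_general L α γ c₀ lam hα hαγ hγL c hc θ θ' hθ hθ'c v v' z z' S S' hv hv'c hz hz'c hS hS'c
    hv0 hvL hz0 hzL y' y'' hy' hy''c g₂ g₄ hg₂c hg₄c heq2 heq4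
end
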